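/- Let (G, I, O, λ) be a labelled open graph with a Pauli flow (p, ≺), let W ⊆ V be any subset of vertices, and form G′ by adding a fresh vertex x adjacent exactly to the vertices of W, with λ′(x) = Z and λ′ = λ elsewhere. Then G′ = (V ∪ {x}, E ∪ {(x,w) : w ∈ W}, I, O, λ′) has a Pauli flow; in fact, p′ defined by p′(v) = p(v) for v ≠ x and p′(x) = {x}, together with the transitive closure of ≺ ∪ {(x,v) : v ∈ N_{G′}(x)}, is a Pauli flow for G′. -/

import Mathlib

/-- Measurement labels: Pauli measurements and measurement planes. -/
inductive MeasLabel | X | Y | Z | XY | XZ | YZ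
deriving DecidableEq

/-- The odd neighbourhood of a set `S`: vertices with an odd number of neighbours in `S`. -/
def OddNbhd {V : Type*} [Fintype V] (G : SimpleGraph V) (S : Set V) : Set V :=
  {v | Odd ((G.neighborSet v ∩ S).ncard)}

open MeasLabel in
/-- Pauli flow for a labelled open graph `(G, I, O, lam)`. -/
def IsPauliFlow {V : Type*} [Fintype V] (G : SimpleGraph V) (Inp Out : Set V)
    (lam : V → MeasLabel) (p : V → Set V) (ord : V → V → Prop) : Prop :=
  Irreflexive ord ∧ Transitive ord ∧
  (∀ u ∉ Out, p u ⊆ Inpᶜ) ∧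
  -- (1)
  (∀ u ∉ Out, ∀ v ∉ Out, v ∈ p u → v ≠ u → lam v ≠ X → lam v ≠ Y → ord u v) ∧
  -- (2)
  (∀ u ∉ Out, ∀ v ∉ Out, v ∈ OddNbhd G (p u) → v ≠ u → lam v ≠ Y → lam v ≠ Z → ord u v) ∧
  -- (3)
  (∀ u ∉ Out, ∀ v ∉ Out, ¬ ord u v → lam v = Y → (v ∈ p u ↔ v ∈ OddNbhd G (p u))) ∧
  -- (4)
  (∀ u ∉ Out, lam u = XY → u ∉ p u ∧ u ∈ OddNbhd G (p u)) ∧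
  -- (5)
  (∀ u ∉ Out, lam u = XZ → u ∈ p u ∧ u ∈ OddNbhd G (p u)) ∧
  -- (6)
  (∀ u ∉ Out, lam u = YZ → u ∈ p u ∧ u ∉ OddNbhd G (p u)) ∧
  -- (7)
  (∀ u ∉ Out, lam u = X → u ∈ OddNbhd G (p u)) ∧
  -- (8)
  (∀ u ∉ Out, lam u = Z → u ∈ p u) ∧
  -- (9)
  (∀ u ∉ Out, lam u = Y →
    ((u ∈ p u ∧ u ∉ OddNbhd G (p u)) ∨ (u ∉ p u ∧ u ∈ OddNbhd G (p u))))

/-- Extend `G` by a fresh vertex (`none`) adjacent exactly to the vertices of `W`. -/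
def extendGraph {V : Type*} (G : SimpleGraph V) (W : Set V) : SimpleGraph (Option V) :=
  SimpleGraph.fromRel (fun a b =>
    match a, b with
    | some a, some b => G.Adj a b
    | none, some w => w ∈ W
    | _, _ => False)

/-!
Write `x` for the new vertex `none`. On the old vertices the extended graph is `G` itself (`some`
is an induced embedding), so an old correction set `some '' p u` has the same odd neighbourhood
among old vertices as `p u`; the only possible new member of it is `x`, which is `Z`-measured and
hence never constrained there, and no vertex is ever required to precede `x`. The new vertex is
corrected by `{x}`, whose odd neighbourhood is exactly `W`; this is why `x` is put before the
vertices of `W`.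
-/

section OddNbhd

variable {V V' : Type*} [Fintype V] [Fintype V'] {G : SimpleGraph V} {G' : SimpleGraph V'}

theorem mem_oddNbhd_singleton {v x : V} : v ∈ OddNbhd G {x} ↔ G.Adj v x := by
  by_cases h : G.Adj v x
  · simp [OddNbhd, Set.inter_singleton_of_mem ((G.mem_neighborSet v x).mpr h), h]
  · simp [OddNbhd, Set.inter_singleton_eq_empty.mpr (mt (G.mem_neighborSet v x).mp h), h]

theorem SimpleGraph.Embedding.mem_oddNbhd_image (f : G ↪g G') (S : Set V) (v : V) :
    f v ∈ OddNbhd G' (f '' S) ↔ v ∈ OddNbhd G S := by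
  have hnbhd : G'.neighborSet (f v) ∩ f '' S = f '' (G.neighborSet v ∩ S) := by
    ext w
    constructor
    · rintro ⟨hadj, u, hu, rfl⟩
      exact ⟨u, ⟨f.map_adj_iff.mp hadj, hu⟩, rfl⟩
    · rintro ⟨u, ⟨hadj, hu⟩, rfl⟩
      exact ⟨f.map_adj_iff.mpr hadj, u, hu, rfl⟩
  simp only [OddNbhd, Set.mem_ofPred_eq, hnbhd, Set.ncard_image_of_injective _ f.injective]

end OddNbhd

section ExtendGraph

variable {V : Type*} (G : SimpleGraph V) (W : Set V)

theorem extendGraph_adj_some_some {u v : V} :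
    (extendGraph G W).Adj (some u) (some v) ↔ G.Adj u v := by
  simp only [extendGraph, SimpleGraph.fromRel_adj, ne_eq, Option.some.injEq]
  exact ⟨fun ⟨_, h⟩ => h.elim id G.adj_symm, fun h => ⟨h.ne, Or.inl h⟩⟩

theorem extendGraph_adj_none {a : Option V} :
    (extendGraph G W).Adj a none ↔ a ∈ some '' W := by
  cases a <;> simp [extendGraph]

def extendGraphEmbedding : G ↪g extendGraph G W where
  toFun := some
  inj' := Option.some_injective V
  map_rel_iff' := extendGraph_adj_some_some G W

variable [Fintype V]

theorem some_mem_oddNbhd_extendGraph_image_some (S : Set V) (v : V) :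
    some v ∈ OddNbhd (extendGraph G W) (some '' S) ↔ v ∈ OddNbhd G S :=
  (extendGraphEmbedding G W).mem_oddNbhd_image S v

theorem oddNbhd_extendGraph_singleton_none :
    OddNbhd (extendGraph G W) {none} = some '' W :=
  Set.ext fun _ => mem_oddNbhd_singleton.trans (extendGraph_adj_none G W)

end ExtendGraph

@[simp]
theorem Option.none_notMem_image_some {α : Type*} (S : Set α) : none ∉ some '' S := by
  simp

namespace Relation

variable {α : Type*} {r : Option α → Option α → Prop} {s : α → α → Prop}

theorem not_transGen_none (hr : ∀ a, ¬ r a none) {a : Option α} : ¬ TransGen r a none := by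
  rw [TransGen.tail'_iff]
  rintro ⟨b, -, hb⟩
  exact hr b hb

theorem transGen_some_some_iff (hr : ∀ a, ¬ r a none) (hs : ∀ u v, r (some u) (some v) ↔ s u v)
    {u v : α} : TransGen r (some u) (some v) ↔ TransGen s u v := by
  refine ⟨fun h => ?_, fun h => TransGen.lift some (fun a b => (hs a b).mpr) _ _ h⟩
  suffices ∀ b, TransGen r (some u) b → ∀ v, b = some v → TransGen s u v from this _ h v rfl
  intro b h
  induction h with
  | single h => rintro v rfl; exact .single ((hs u v).mp h)
  | @tail b c hb hbc ih =>
    rintro v rfl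
    cases b with
    | none => exact absurd hb (not_transGen_none hr)
    | some w => exact (ih w rfl).tail ((hs w v).mp hbc)

end Relation

theorem IsPauliFlow.extendGraph {V : Type*} [Fintype V]
    {G : SimpleGraph V} {Inp Out : Set V} {lam : V → MeasLabel}
    {p : V → Set V} {ord : V → V → Prop}
    (hflow : IsPauliFlow G Inp Out lam p ord) (W : Set V) {r : Option V → Option V → Prop}
    (hr : ∀ a, ¬ r a none) (hs : ∀ u v, r (some u) (some v) ↔ ord u v)
    (hW : ∀ v ∈ W, r none (some v)) :
    IsPauliFlow (extendGraph G W) (some '' Inp) (some '' Out)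
      (fun a => a.elim MeasLabel.Z lam) (fun a => a.elim {none} (fun v => some '' p v))
      (Relation.TransGen r) := by
  obtain ⟨hirr, htr, hsub, h1, h2, h3, h4, h5, h6, h7, h8, h9⟩ := hflow
  have : IsTrans V ord := ⟨fun _ _ _ => @htr _ _ _⟩
  have hsome (u v : V) : Relation.TransGen r (some u) (some v) ↔ ord u v := by
    rw [Relation.transGen_some_some_iff hr hs, Relation.transGen_eq_self]
  have hnone (a : Option V) : ¬ Relation.TransGen r a none := Relation.not_transGen_none hr
  have hnew (v : V) (hv : v ∈ W) : Relation.TransGen r none (some v) := .single (hW v hv)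
  refine ⟨?_, fun _ _ _ => Relation.TransGen.trans, ?_, ?_, ?_, ?_, ?_, ?_, ?_, ?_, ?_, ?_⟩
  · rintro (_ | u) h
    exacts [hnone _ h, hirr u ((hsome u u).mp h)]
  all_goals simp_all [-Set.mem_image, Option.forall, (Option.some_injective V).mem_set_image,
    Set.preimage_image_eq _ (Option.some_injective V), some_mem_oddNbhd_extendGraph_image_some,
    oddNbhd_extendGraph_singleton_none]
  -- condition (3) at `x`: a `Y`-vertex of `W` cannot be unordered with `x`
  exact fun v _ hv _ hvW => hv (hnew v hvW)

/-- Inserting a new `Z`-measured qubit connected to an arbitrary subset `W` of the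
existing qubits preserves the existence of Pauli flow; in fact the explicitly
given `p'` and transitive closure order form a Pauli flow for the extended graph. -/
theorem z_insertion_preserves_pauli_flow {V : Type*} [Fintype V]
    (G : SimpleGraph V) (Inp Out : Set V) (lam : V → MeasLabel)
    (p : V → Set V) (ord : V → V → Prop)
    (hflow : IsPauliFlow G Inp Out lam p ord) (W : Set V) :
    IsPauliFlow (extendGraph G W) (some '' Inp) (some '' Out)
      (fun a => a.elim MeasLabel.Z lam)
      (fun a => a.elim {(none : Option V)} (fun v => some '' p v))
      (Relation.TransGen (fun a b =>
        match a, b with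
        | some u, some v => ord u v
        | none, some v => v ∈ W
        | _, _ => False)) := by
  refine hflow.extendGraph W ?_ (fun _ _ => Iff.rfl) (fun _ => id)
  rintro (_ | _) h <;> exact h
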